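/- arXiv:2201.12759 — 10 statements merged into one kernel-verified Lean document; each statement's English description precedes it below -/
import Mathlib

section
/- For a zero-dimensional topological space X, the mildly Menger game G_fin(C_O, C_O) is equivalent to the Menger game G_fin(O, O): player ONE has a winning strategy in G_fin(C_O, C_O) on X if and only if ONE has a winning strategy in G_fin(O, O) on X, and player TWO has a winning strategy in G_fin(C_O, C_O) on X if and only if TWO has a winning strategy in G_fin(O, O) on X. -/
/-- `X` is zero-dimensional: it is nonempty and has a base consisting of clopen sets. -/
def ZeroDim (X : Type*) [TopologicalSpace X] : Prop :=
  Nonempty X ∧ ∀ (x : X) (U : Set X), IsOpen U → x ∈ U →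
    ∃ C : Set X, IsClopen C ∧ x ∈ C ∧ C ⊆ U

/-- `𝒰` is a cover of `X` consisting of sets satisfying `P`
(e.g. an open cover for `P = IsOpen`, a clopen cover for `P = IsClopen`). -/
def IsCover {X : Type*} (P : Set X → Prop) (𝒰 : Set (Set X)) : Prop :=
  (∀ U ∈ 𝒰, P U) ∧ ⋃₀ 𝒰 = Set.univ

/-- The selection principle `S_fin(P-covers, P-covers)`: for every sequence of
`P`-covers `u n` there are finite subsets `v n ⊆ u n` whose union is a cover. -/
def SelFin {X : Type*} (P : Set X → Prop) : Prop :=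
  ∀ u : ℕ → Set (Set X), (∀ n, IsCover P (u n)) →
    ∃ v : ℕ → Set (Set X), (∀ n, (v n).Finite ∧ v n ⊆ u n) ∧
      (⋃ n, ⋃₀ v n) = Set.univ

/-- Player ONE has a winning strategy in the selection game `G_fin(P-covers, P-covers)`:
a strategy `σ`, depending on TWO's previous moves, always playing `P`-covers, such that for
every sequence of legal responses by TWO (finite subsets of the cover just played),
the union of TWO's choices fails to cover. -/
def ONEWinsSel {X : Type*} (P : Set X → Prop) : Prop :=
  ∃ σ : List (Set (Set X)) → Set (Set X),
    (∀ h, IsCover P (σ h)) ∧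
    ∀ v : ℕ → Set (Set X),
      (∀ n, (v n).Finite ∧ v n ⊆ σ (List.ofFn fun i : Fin n => v i)) →
      (⋃ n, ⋃₀ v n) ≠ Set.univ

/-- Player TWO has a winning strategy in the selection game `G_fin(P-covers, P-covers)`:
a strategy `τ`, depending on ONE's moves so far, such that against every sequence of
`P`-covers played by ONE, TWO's responses are legal (finite subsets of the corresponding
cover) and their union is a cover. -/
def TWOWinsSel {X : Type*} (P : Set X → Prop) : Prop :=
  ∃ τ : List (Set (Set X)) → Set (Set X),
    ∀ u : ℕ → Set (Set X), (∀ n, IsCover P (u n)) →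
      (∀ n, (τ (List.ofFn fun i : Fin (n + 1) => u i)).Finite ∧
        τ (List.ofFn fun i : Fin (n + 1) => u i) ⊆ u n) ∧
      (⋃ n, ⋃₀ τ (List.ofFn fun i : Fin (n + 1) => u i)) = Set.univ

/-- Player ONE has a winning strategy in the `Q`-`R` game (in round `n`, ONE picks a set
`K n` with `Q (K n)` and TWO responds with a set `U n` with `R (U n)` and `K n ⊆ U n`;
ONE wins if `⋃ n, U n = univ`).  E.g. `Q = IsCompact`, `R = IsClopen` is the
compact-clopen game; `R = IsOpen` gives the compact-open game. -/
def ONEWinsCC {X : Type*} (Q R : Set X → Prop) : Prop :=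
  ∃ σ : List (Set X) → Set X,
    (∀ h, Q (σ h)) ∧
    ∀ v : ℕ → Set X,
      (∀ n, R (v n) ∧ σ (List.ofFn fun i : Fin n => v i) ⊆ v n) →
      (⋃ n, v n) = Set.univ

/-- Player TWO has a winning strategy in the `Q`-`R` game: a strategy `τ`, depending on
ONE's moves so far, such that against every sequence of sets satisfying `Q` played by ONE,
TWO's responses satisfy `R`, contain ONE's corresponding sets, and fail to cover `X`. -/
def TWOWinsCC {X : Type*} (Q R : Set X → Prop) : Prop :=
  ∃ τ : List (Set X) → Set X,
    ∀ u : ℕ → Set X, (∀ n, Q (u n)) →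
      (∀ n, R (τ (List.ofFn fun i : Fin (n + 1) => u i)) ∧
        u n ⊆ τ (List.ofFn fun i : Fin (n + 1) => u i)) ∧
      (⋃ n, τ (List.ofFn fun i : Fin (n + 1) => u i)) ≠ Set.univ

/-- A subset `K` of `X` is mildly compact if every cover of `K` by clopen subsets
of `X` contains a finite subcover. -/
def MildlyCompact {X : Type*} [TopologicalSpace X] (K : Set X) : Prop :=
  ∀ 𝒰 : Set (Set X), (∀ U ∈ 𝒰, IsClopen U) → K ⊆ ⋃₀ 𝒰 →
    ∃ 𝒱 ⊆ 𝒰, 𝒱.Finite ∧ K ⊆ ⋃₀ 𝒱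

/-- The quasi-component of a subset `K` of `X`: the intersection of all clopen
subsets of `X` containing `K`. -/
def QuasiComp {X : Type*} [TopologicalSpace X] (K : Set X) : Set X :=
  ⋂₀ {C : Set X | IsClopen C ∧ K ⊆ C}

/-
Every clopen cover is an open cover, so a winning strategy in the open game is also one in the
clopen game for TWO, and a winning strategy in the clopen game is also one in the open game for
ONE. Conversely, in a zero-dimensional space the clopen sets lying inside members of an open
cover again form a cover, and a finite choice from this refinement is carried back to a finite
choice from the open cover by sending each clopen set to a member containing it; this only
enlarges the union, so the other two winning strategies transfer as well. ONE's transferred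
strategy has to reconstruct the simulated play of the open game from TWO's clopen moves.
-/

open Set

section Refinement

variable {X : Type*}

def refinementBy (Q : Set X → Prop) (u : Set (Set X)) : Set (Set X) :=
  {C | Q C ∧ ∃ U ∈ u, C ⊆ U}

/-- A member of `u` containing `C`; a junk value if there is none. -/
noncomputable def superset (u : Set (Set X)) (C : Set X) : Set X :=
  Classical.epsilon fun U => U ∈ u ∧ C ⊆ U

lemma superset_spec {u : Set (Set X)} {C : Set X} (h : ∃ U ∈ u, C ⊆ U) :
    superset u C ∈ u ∧ C ⊆ superset u C :=
  Classical.epsilon_spec h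

lemma image_superset_of_subset_refinementBy {Q : Set X → Prop} {u w : Set (Set X)}
    (hw : w ⊆ refinementBy Q u) :
    superset u '' w ⊆ u ∧ ⋃₀ w ⊆ ⋃₀ (superset u '' w) := by
  constructor
  · rintro _ ⟨C, hC, rfl⟩
    exact (superset_spec (hw hC).2).1
  · rintro x ⟨C, hC, hxC⟩
    exact ⟨superset u C, mem_image_of_mem _ hC, (superset_spec (hw hC).2).2 hxC⟩

lemma ONEWinsSel.of_imp {P Q : Set X → Prop} (hQP : ∀ U, Q U → P U)
    (h : ONEWinsSel Q) : ONEWinsSel P := by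
  obtain ⟨σ, hσ, hwin⟩ := h
  exact ⟨σ, fun l => ⟨fun U hU => hQP U ((hσ l).1 U hU), (hσ l).2⟩, hwin⟩

lemma TWOWinsSel.of_imp {P Q : Set X → Prop} (hQP : ∀ U, Q U → P U)
    (h : TWOWinsSel P) : TWOWinsSel Q := by
  obtain ⟨τ, hτ⟩ := h
  exact ⟨τ, fun u hu => hτ u fun n => ⟨fun U hU => hQP U ((hu n).1 U hU), (hu n).2⟩⟩

lemma List.ofFn_fin_succ_eq_append {α : Type*} (v : ℕ → α) (n : ℕ) :
    (List.ofFn fun i : Fin (n + 1) => v i) = (List.ofFn fun i : Fin n => v i) ++ [v n] := by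
  rw [List.ofFn_succ', List.concat_eq_append]
  rfl

/-- The play of the game against `σ` that shadows a play `l` of the refined game: each set TWO
chose is replaced by a member of `σ`'s current cover containing it. -/
noncomputable def simulatedHistory (σ : List (Set (Set X)) → Set (Set X))
    (l : List (Set (Set X))) : List (Set (Set X)) :=
  l.foldl (fun acc a => acc ++ [superset (σ acc) '' a]) []

noncomputable def simulatedMove (σ : List (Set (Set X)) → Set (Set X))
    (v : ℕ → Set (Set X)) (n : ℕ) : Set (Set X) :=
  superset (σ (simulatedHistory σ (List.ofFn fun i : Fin n => v i))) '' v n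

lemma simulatedHistory_ofFn (σ : List (Set (Set X)) → Set (Set X)) (v : ℕ → Set (Set X))
    (n : ℕ) : simulatedHistory σ (List.ofFn fun i : Fin n => v i)
      = List.ofFn fun i : Fin n => simulatedMove σ v i := by
  induction n with
  | zero => rfl
  | succ n ih =>
    rw [List.ofFn_fin_succ_eq_append, List.ofFn_fin_succ_eq_append, ← ih]
    exact List.foldl_concat ..

lemma ONEWinsSel.of_refinementBy {P Q : Set X → Prop}
    (hPQ : ∀ u, IsCover P u → IsCover Q (refinementBy Q u)) (h : ONEWinsSel P) :
    ONEWinsSel Q := by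
  obtain ⟨σ, hσ, hwin⟩ := h
  refine ⟨fun l => refinementBy Q (σ (simulatedHistory σ l)), fun l => hPQ _ (hσ _), ?_⟩
  intro v hv hcover
  have hlift n := image_superset_of_subset_refinementBy (hv n).2
  refine hwin (simulatedMove σ v) (fun n => ⟨(hv n).1.image _, ?_⟩) ?_
  · rw [← simulatedHistory_ofFn]
    exact (hlift n).1
  · exact univ_subset_iff.mp (hcover ▸ iUnion_mono fun n => (hlift n).2)

lemma TWOWinsSel.of_refinementBy {P Q : Set X → Prop}
    (hPQ : ∀ u, IsCover P u → IsCover Q (refinementBy Q u)) (h : TWOWinsSel Q) :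
    TWOWinsSel P := by
  obtain ⟨τ, hτ⟩ := h
  refine ⟨fun l => superset (l.getLastD ∅) '' τ (l.map (refinementBy Q)), fun u hu => ?_⟩
  obtain ⟨hlegal, hcover⟩ := hτ (fun n => refinementBy Q (u n)) fun n => hPQ _ (hu n)
  have hlast n : (List.ofFn fun i : Fin (n + 1) => u i).getLastD ∅ = u n := by
    rw [List.ofFn_fin_succ_eq_append, List.getLastD_concat]
  have hmap n : (List.ofFn fun i : Fin (n + 1) => u i).map (refinementBy Q)
      = List.ofFn fun i : Fin (n + 1) => refinementBy Q (u i) := List.map_ofFn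
  have hlift n := image_superset_of_subset_refinementBy (hlegal n).2
  simp only [hlast, hmap]
  exact ⟨fun n => ⟨(hlegal n).1.image _, (hlift n).1⟩,
    univ_subset_iff.mp (hcover ▸ iUnion_mono fun n => (hlift n).2)⟩

end Refinement

lemma ZeroDim.isCover_refinementBy_isClopen {X : Type*} [TopologicalSpace X] (hX : ZeroDim X)
    {u : Set (Set X)} (hu : IsCover IsOpen u) : IsCover IsClopen (refinementBy IsClopen u) := by
  refine ⟨fun C hC => hC.1, eq_univ_of_forall fun x => ?_⟩
  obtain ⟨U, hUu, hxU⟩ := mem_sUnion.mp (hu.2 ▸ mem_univ x)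
  obtain ⟨C, hC, hxC, hCU⟩ := hX.2 x U (hu.1 U hUu) hxU
  exact ⟨C, ⟨hC, U, hUu, hCU⟩, hxC⟩

/-- For a zero-dimensional space, the mildly Menger game `G_fin(C_O, C_O)` is equivalent
to the Menger game `G_fin(O, O)`: ONE has a winning strategy in one iff in the other,
and likewise for TWO. -/
theorem stmt1 {X : Type*} [TopologicalSpace X] (hX : ZeroDim X) :
    (ONEWinsSel (X := X) IsClopen ↔ ONEWinsSel (X := X) IsOpen) ∧
    (TWOWinsSel (X := X) IsClopen ↔ TWOWinsSel (X := X) IsOpen) := by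
  have hopen : ∀ U : Set X, IsClopen U → IsOpen U := fun _ hU => hU.isOpen
  have hrefine := fun u (hu : IsCover IsOpen u) => hX.isCover_refinementBy_isClopen hu
  exact ⟨⟨ONEWinsSel.of_imp hopen, ONEWinsSel.of_refinementBy hrefine⟩,
    ⟨TWOWinsSel.of_refinementBy hrefine, TWOWinsSel.of_imp hopen⟩⟩
end

section
/- For a zero-dimensional topological space X, the compact-clopen game on X is equivalent to the compact-open game on X: player ONE has a winning strategy in the compact-clopen game if and only if ONE has a winning strategy in the compact-open game, and player TWO has a winning strategy in the compact-clopen game if and only if TWO has a winning strategy in the compact-open game. -/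
/-!
Every legal response of TWO in the compact-open game can be shrunk to a legal response in the
compact-clopen game: in a zero-dimensional space a compact set `K` inside an open set `U` has a
clopen neighbourhood inside `U`, a finite union of basic clopen sets. So TWO can convert a
compact-open strategy into a compact-clopen one by shrinking its moves, and ONE can run a
compact-clopen strategy in the compact-open game by feeding it the shrunk versions of TWO's
moves. The remaining two implications hold because clopen responses are open responses.
-/

theorem exists_isClopen_between {X : Type*} [TopologicalSpace X]
    (hbase : ∀ (x : X) (U : Set X), IsOpen U → x ∈ U → ∃ C, IsClopen C ∧ x ∈ C ∧ C ⊆ U)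
    {K U : Set X} (hK : IsCompact K) (hU : IsOpen U) (hKU : K ⊆ U) :
    ∃ C, IsClopen C ∧ K ⊆ C ∧ C ⊆ U := by
  choose C hC hxC hCU using fun x (hx : x ∈ K) => hbase x U hU (hKU hx)
  obtain ⟨t, hKt⟩ := hK.elim_nhds_subcover' (fun x hx => C x hx)
    (fun x hx => (hC x hx).isOpen.mem_nhds (hxC x hx))
  exact ⟨⋃ x ∈ t, C x.1 x.2, t.finite_toSet.isClopen_biUnion fun x _ => hC x.1 x.2, hKt,
    Set.iUnion₂_subset fun x _ => hCU x.1 x.2⟩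

section Games

variable {X : Type*} {Q R R' : Set X → Prop}

theorem ONEWinsCC.anti_right (hRR' : R ≤ R') (h : ONEWinsCC Q R') : ONEWinsCC Q R := by
  obtain ⟨σ, hσQ, hσwin⟩ := h
  exact ⟨σ, hσQ, fun v hv => hσwin v fun n => ⟨hRR' _ (hv n).1, (hv n).2⟩⟩

theorem TWOWinsCC.mono_right (hRR' : R ≤ R') (h : TWOWinsCC Q R) : TWOWinsCC Q R' := by
  obtain ⟨τ, hτ⟩ := h
  refine ⟨τ, fun u hu => ?_⟩
  obtain ⟨hlegal, hwin⟩ := hτ u hu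
  exact ⟨fun n => ⟨hRR' _ (hlegal n).1, (hlegal n).2⟩, hwin⟩

/-- Replays a history `[U₀, U₁, …]` of TWO's moves against `σ`, replacing each `Uₖ` by
`Cₖ := sh (σ [C₀, …, Cₖ₋₁]) Uₖ`. -/
def shrinkHistory (σ : List (Set X) → Set X) (sh : Set X → Set X → Set X)
    (l : List (Set X)) : List (Set X) :=
  l.foldl (fun acc U => acc ++ [sh (σ acc) U]) []

theorem shrinkHistory_ofFn (σ : List (Set X) → Set X) (sh : Set X → Set X → Set X)
    (v : ℕ → Set X) (n : ℕ) :
    shrinkHistory σ sh (List.ofFn fun i : Fin n => v i) =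
      List.ofFn fun i : Fin n =>
        sh (σ (shrinkHistory σ sh (List.ofFn fun j : Fin i => v j))) (v i) := by
  induction n with
  | zero => rfl
  | succ n ih =>
    simp only [List.ofFn_succ', List.concat_eq_append, Fin.val_castSucc, Fin.val_last]
    rw [← ih]
    simp only [shrinkHistory, List.foldl_append, List.foldl_cons, List.foldl_nil]

theorem ONEWinsCC.of_shrink
    (hshrink : ∀ K U, Q K → R' U → K ⊆ U → ∃ C, R C ∧ K ⊆ C ∧ C ⊆ U)
    (h : ONEWinsCC Q R) : ONEWinsCC Q R' := by
  obtain ⟨σ, hσQ, hσwin⟩ := h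
  choose! sh hsh using hshrink
  refine ⟨fun l => σ (shrinkHistory σ sh l), fun l => hσQ _, fun v hv => ?_⟩
  set c : ℕ → Set X := fun n => sh (σ (shrinkHistory σ sh (List.ofFn fun i : Fin n => v i))) (v n)
  have hc : ∀ n, R (c n) ∧ σ (List.ofFn fun i : Fin n => c i) ⊆ c n ∧ c n ⊆ v n := fun n => by
    rw [← shrinkHistory_ofFn]
    exact hsh _ _ (hσQ _) (hv n).1 (hv n).2
  have hc_cover : (⋃ n, c n) = Set.univ := hσwin c fun n => ⟨(hc n).1, (hc n).2.1⟩
  exact Set.eq_univ_of_univ_subset (hc_cover ▸ Set.iUnion_mono fun n => (hc n).2.2)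

theorem TWOWinsCC.of_shrink
    (hshrink : ∀ K U, Q K → R' U → K ⊆ U → ∃ C, R C ∧ K ⊆ C ∧ C ⊆ U)
    (h : TWOWinsCC Q R') : TWOWinsCC Q R := by
  obtain ⟨τ, hτ⟩ := h
  choose! sh hsh using hshrink
  refine ⟨fun l => sh (l.getLastD ∅) (τ l), fun u hu => ?_⟩
  obtain ⟨hlegal, hwin⟩ := hτ u hu
  have hlast : ∀ n, (List.ofFn fun i : Fin (n + 1) => u i).getLastD ∅ = u n := fun n => by
    rw [List.ofFn_succ', List.concat_eq_append, List.getLastD_concat, Fin.val_last]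
  simp only [hlast]
  have hshrunk := fun n => hsh _ _ (hu n) (hlegal n).1 (hlegal n).2
  exact ⟨fun n => ⟨(hshrunk n).1, (hshrunk n).2.1⟩, fun hcover =>
    hwin (Set.eq_univ_of_univ_subset (hcover ▸ Set.iUnion_mono fun n => (hshrunk n).2.2))⟩

end Games

/-- For a zero-dimensional space, the compact-clopen game is equivalent to the
compact-open game: ONE has a winning strategy in one iff in the other, and likewise
for TWO. -/
theorem stmt2 {X : Type*} [TopologicalSpace X] (hX : ZeroDim X) :
    (ONEWinsCC (X := X) IsCompact IsClopen ↔ ONEWinsCC (X := X) IsCompact IsOpen) ∧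
    (TWOWinsCC (X := X) IsCompact IsClopen ↔ TWOWinsCC (X := X) IsCompact IsOpen) := by
  have hshrink : ∀ K U : Set X, IsCompact K → IsOpen U → K ⊆ U →
      ∃ C, IsClopen C ∧ K ⊆ C ∧ C ⊆ U :=
    fun _ _ hK hU hKU => exists_isClopen_between hX.2 hK hU hKU
  have hclopen_open : (IsClopen : Set X → Prop) ≤ IsOpen := fun _ hU => hU.isOpen
  exact ⟨⟨ONEWinsCC.of_shrink hshrink, ONEWinsCC.anti_right hclopen_open⟩,
    ⟨TWOWinsCC.mono_right hclopen_open, TWOWinsCC.of_shrink hshrink⟩⟩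
end

section
/- For any topological space X, if player ONE has a winning strategy in the mildly compact-clopen game on X, then player TWO has a winning strategy in the mildly Menger game G_fin(C_O, C_O) on X. -/
/-!
TWO simulates a play of the `Q`-`R` game in which ONE follows a winning strategy `σ`. Facing
the cover `𝒰ₙ`, TWO picks a finite subfamily covering ONE's current simulated move `Kₙ` whose
union `Wₙ` satisfies `R` (for mildly compact `Kₙ` and clopen covers, any finite subcover will
do); `Wₙ` is then a legal answer to `Kₙ` in the simulated play. As `σ` wins, the `Wₙ` cover
`X`, and hence so do TWO's finite selections.
-/

def runHistory {α β : Type*} (step : List α → β → α) (l : List β) : List α :=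
  l.foldl (fun acc b => acc ++ [step acc b]) []

theorem runHistory_ofFn {α β : Type*} (step : List α → β → α) (u : ℕ → β) (n : ℕ) :
    runHistory step (List.ofFn fun i : Fin n => u i) =
      List.ofFn fun i : Fin n => step (runHistory step (List.ofFn fun j : Fin i => u j)) (u i) := by
  induction n with
  | zero => rfl
  | succ n ih =>
    rw [List.ofFn_succ', List.ofFn_succ', runHistory, List.concat_eq_append, List.foldl_concat,
      ← runHistory, List.concat_eq_append]
    simp [ih]

section SelectionGames

variable {X : Type*}

/-- `ρ` answers ONE's last cover, given as history the simulated `Q`-`R` play whose moves of TWO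
are the unions of TWO's earlier answers. -/
def simulatedStrategy (ρ : List (Set X) → Set (Set X) → Set (Set X))
    (l : List (Set (Set X))) : Set (Set X) :=
  ρ (runHistory (fun acc 𝒰 => ⋃₀ ρ acc 𝒰) l.dropLast) (l.getLastD ∅)

theorem simulatedStrategy_ofFn_succ (ρ : List (Set X) → Set (Set X) → Set (Set X))
    (u : ℕ → Set (Set X)) (n : ℕ) :
    simulatedStrategy ρ (List.ofFn fun i : Fin (n + 1) => u i) =
      ρ (runHistory (fun acc 𝒰 => ⋃₀ ρ acc 𝒰) (List.ofFn fun i : Fin n => u i)) (u n) := by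
  rw [simulatedStrategy, List.ofFn_succ']
  simp

theorem TWOWinsSel.of_ONEWinsCC {P Q R : Set X → Prop} (hONE : ONEWinsCC Q R)
    (hsel : ∀ K, Q K → ∀ 𝒰, IsCover P 𝒰 → ∃ 𝒱 ⊆ 𝒰, 𝒱.Finite ∧ K ⊆ ⋃₀ 𝒱 ∧ R (⋃₀ 𝒱)) :
    TWOWinsSel P := by
  obtain ⟨σ, hσQ, hσwin⟩ := hONE
  -- the implication inside the existential makes the chosen `ρ` total
  have hρ : ∀ h 𝒰, ∃ 𝒱, IsCover P 𝒰 → 𝒱 ⊆ 𝒰 ∧ 𝒱.Finite ∧ σ h ⊆ ⋃₀ 𝒱 ∧ R (⋃₀ 𝒱) := by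
    intro h 𝒰
    by_cases h𝒰 : IsCover P 𝒰
    · obtain ⟨𝒱, h𝒱⟩ := hsel (σ h) (hσQ h) 𝒰 h𝒰
      exact ⟨𝒱, fun _ => h𝒱⟩
    · exact ⟨∅, fun h𝒰' => absurd h𝒰' h𝒰⟩
  choose ρ hρ using hρ
  refine ⟨simulatedStrategy ρ, fun u hu => ?_⟩
  set W : ℕ → Set X := fun n => ⋃₀ simulatedStrategy ρ (List.ofFn fun i : Fin (n + 1) => u i)
  have hhist : ∀ n, runHistory (fun acc 𝒰 => ⋃₀ ρ acc 𝒰) (List.ofFn fun i : Fin n => u i) =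
      List.ofFn fun i : Fin n => W i := by
    intro n
    simp only [W, simulatedStrategy_ofFn_succ]
    exact runHistory_ofFn _ u n
  have hmove : ∀ n, simulatedStrategy ρ (List.ofFn fun i : Fin (n + 1) => u i) =
      ρ (List.ofFn fun i : Fin n => W i) (u n) := by
    intro n
    rw [simulatedStrategy_ofFn_succ, hhist]
  refine ⟨fun n => ?_, hσwin W fun n => ?_⟩
  · rw [hmove]
    exact ⟨(hρ _ _ (hu n)).2.1, (hρ _ _ (hu n)).1⟩
  · obtain ⟨-, -, hcov, hR⟩ := hρ (List.ofFn fun i : Fin n => W i) (u n) (hu n)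
    have hWn : W n = ⋃₀ ρ (List.ofFn fun i : Fin n => W i) (u n) := congrArg Set.sUnion (hmove n)
    exact ⟨hWn ▸ hR, hWn ▸ hcov⟩

end SelectionGames

theorem MildlyCompact.exists_finite_subcover_isClopen {X : Type*} [TopologicalSpace X]
    {K : Set X} (hK : MildlyCompact K) {𝒰 : Set (Set X)} (h𝒰 : IsCover IsClopen 𝒰) :
    ∃ 𝒱 ⊆ 𝒰, 𝒱.Finite ∧ K ⊆ ⋃₀ 𝒱 ∧ IsClopen (⋃₀ 𝒱) := by
  obtain ⟨𝒱, h𝒱𝒰, h𝒱fin, hK𝒱⟩ := hK 𝒰 h𝒰.1 (by simp [h𝒰.2])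
  refine ⟨𝒱, h𝒱𝒰, h𝒱fin, hK𝒱, ?_⟩
  rw [Set.sUnion_eq_biUnion]
  exact h𝒱fin.isClopen_biUnion fun U hU => h𝒰.1 U (h𝒱𝒰 hU)

/-- If ONE has a winning strategy in the mildly compact-clopen game on `X`, then TWO has
a winning strategy in the mildly Menger game `G_fin(C_O, C_O)` on `X`. -/
theorem stmt4 {X : Type*} [TopologicalSpace X]
    (h : ONEWinsCC (X := X) MildlyCompact IsClopen) :
    TWOWinsSel (X := X) IsClopen :=
  TWOWinsSel.of_ONEWinsCC h fun _ hK _ h𝒰 => hK.exists_finite_subcover_isClopen h𝒰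
end

section
/- If X is a zero-dimensional, second-countable metrizable space (equivalently, a space homeomorphic to a subset of the irrational numbers) and player TWO has a winning strategy in the mildly Menger game G_fin(C_O, C_O) on X, then X is σ-compact. -/
open Set

def GoodStrat {X : Type*} [TopologicalSpace X] (τ : List (Set (Set X)) → Set (Set X)) : Prop :=
  ∀ u : ℕ → Set (Set X), (∀ n, IsCover IsClopen (u n)) →
    (∀ n, (τ (List.ofFn fun i : Fin (n + 1) => u i)).Finite ∧
      τ (List.ofFn fun i : Fin (n + 1) => u i) ⊆ u n) ∧
    (⋃ n, ⋃₀ τ (List.ofFn fun i : Fin (n + 1) => u i)) = Set.univ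

def Fset {X : Type*} (τ : List (Set (Set X)) → Set (Set X))
    (p : List (Set (Set X))) (D : Set (Set X)) : Set X := ⋃₀ τ (p ++ [D])

def Cset {X : Type*} [TopologicalSpace X] (τ : List (Set (Set X)) → Set (Set X))
    (p : List (Set (Set X))) : Set X :=
  ⋂ D ∈ {D : Set (Set X) | IsCover IsClopen D}, Fset τ p D

lemma ofFn_pad {α : Type*} (p : List α) (D : α) :
    (List.ofFn fun i : Fin (p.length + 1) => (p ++ [D]).getD i D) = p ++ [D] := by
  apply List.ext_getElem
  · simp
  · intro i h1 h2
    simp only [List.getElem_ofFn]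
    rw [List.getD_eq_getElem _ _ (by simpa using h2)]

lemma legal {X : Type*} [TopologicalSpace X] {τ : List (Set (Set X)) → Set (Set X)}
    (hτ : GoodStrat τ) {p : List (Set (Set X))} (hp : ∀ q ∈ p, IsCover IsClopen q)
    {D : Set (Set X)} (hD : IsCover IsClopen D) :
    (τ (p ++ [D])).Finite ∧ τ (p ++ [D]) ⊆ D := by
  set u : ℕ → Set (Set X) := fun i => (p ++ [D]).getD i D with hu
  have hcov : ∀ n, IsCover IsClopen (u n) := by
    intro n
    by_cases hn : n < (p ++ [D]).length
    · have hmem : u n ∈ p ++ [D] := by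
        rw [hu]; simp only; rw [List.getD_eq_getElem _ _ hn]; exact List.getElem_mem hn
      rcases List.mem_append.1 hmem with hm | hm
      · exact hp _ hm
      · simp only [List.mem_singleton] at hm; rwa [hm]
    · have : u n = D := by
        rw [hu]; simp only
        rw [List.getD_eq_getElem?_getD, List.getElem?_eq_none (by omega), Option.getD_none]
      rwa [this]
  have key := (hτ u hcov).1 p.length
  have heq : (List.ofFn fun i : Fin (p.length + 1) => u i) = p ++ [D] := ofFn_pad p D
  rw [heq] at key
  have huD : u p.length = D := by
    rw [hu]; simp only
    rw [List.getD_eq_getElem _ _ (by simp), List.getElem_append_right (by simp)]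
    simp
  rwa [huD] at key

lemma Fset_closed {X : Type*} [TopologicalSpace X] {τ : List (Set (Set X)) → Set (Set X)}
    (hτ : GoodStrat τ) {p : List (Set (Set X))} (hp : ∀ q ∈ p, IsCover IsClopen q)
    {D : Set (Set X)} (hD : IsCover IsClopen D) : IsClosed (Fset τ p D) := by
  obtain ⟨hfin, hsub⟩ := legal hτ hp hD
  have : Fset τ p D = ⋃ S ∈ τ (p ++ [D]), S := by simp [Fset, sUnion_eq_biUnion]
  rw [this]
  exact hfin.isClosed_biUnion fun S hS => ((hD.1 S (hsub hS)).isClosed)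

lemma Cset_closed {X : Type*} [TopologicalSpace X] {τ : List (Set (Set X)) → Set (Set X)}
    (hτ : GoodStrat τ) {p : List (Set (Set X))} (hp : ∀ q ∈ p, IsCover IsClopen q) :
    IsClosed (Cset τ p) :=
  isClosed_biInter fun D hD => Fset_closed hτ hp hD

lemma cauchy_clopen_avoid {X : Type*} [MetricSpace X] {f : Filter X} (hf : Cauchy f)
    (hzd : ∀ (x : X) (U : Set X), IsOpen U → x ∈ U → ∃ C : Set X, IsClopen C ∧ x ∈ C ∧ C ⊆ U)
    (hcon : ∀ x : X, ¬ f ≤ nhds x) :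
    ∀ x : X, ∃ C : Set X, IsClopen C ∧ x ∈ C ∧ Cᶜ ∈ f := by
  intro x
  have h1 : ¬ ∀ ε > 0, Metric.ball x ε ∈ f := by
    intro hx
    exact hcon x (((Metric.nhds_basis_ball (x := x)).ge_iff).2 hx)
  push_neg at h1
  obtain ⟨ε, hε, hball⟩ := h1
  obtain ⟨t, htf, ht⟩ := (Metric.cauchy_iff.1 hf).2 (ε/3) (by linarith)
  obtain ⟨C, hC, hxC, hCsub⟩ := hzd x (Metric.ball x (ε/3)) Metric.isOpen_ball
    (Metric.mem_ball_self (by linarith))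
  refine ⟨C, hC, hxC, ?_⟩
  have hdisj : C ∩ t = ∅ := by
    by_contra hne
    obtain ⟨z, hzC, hzt⟩ := Set.nonempty_iff_ne_empty.2 hne
    apply hball
    apply Filter.mem_of_superset htf
    intro y hy
    have h2 : dist z y < ε/3 := ht z hzt y hy
    have h3 : dist x z < ε/3 := by have := hCsub hzC; rwa [Metric.mem_ball, dist_comm] at this
    have hxy : dist x y < ε := by
      calc dist x y ≤ dist x z + dist z y := dist_triangle _ _ _
        _ < ε := by linarith
    rw [Metric.mem_ball, dist_comm]; exact hxy
  refine Filter.mem_of_superset htf ?_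
  intro y hy hyC
  exact Set.eq_empty_iff_forall_notMem.1 hdisj y ⟨hyC, hy⟩

lemma Cset_subset {X : Type*} [TopologicalSpace X] (τ : List (Set (Set X)) → Set (Set X))
    (p : List (Set (Set X))) {D : Set (Set X)} (hD : IsCover IsClopen D) :
    Cset τ p ⊆ Fset τ p D :=
  biInter_subset_of_mem hD

lemma univ_cover {X : Type*} [TopologicalSpace X] :
    IsCover (IsClopen (X := X)) {Set.univ} :=
  ⟨fun U hU => by rw [mem_singleton_iff] at hU; rw [hU]; exact isClopen_univ,
   by rw [sUnion_singleton]⟩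

lemma Cset_compact {X : Type*} [MetricSpace X]
    (hzd : ∀ (x : X) (U : Set X), IsOpen U → x ∈ U → ∃ C : Set X, IsClopen C ∧ x ∈ C ∧ C ⊆ U)
    {τ : List (Set (Set X)) → Set (Set X)} (hτ : GoodStrat τ)
    {p : List (Set (Set X))} (hp : ∀ q ∈ p, IsCover IsClopen q) :
    IsCompact (Cset τ p) := by
  rw [isCompact_iff_totallyBounded_isComplete]
  constructor
  · rw [Metric.totallyBounded_iff]
    intro ε hε
    set D : Set (Set X) := {S | IsClopen S ∧ ∃ x, S ⊆ Metric.ball x ε} with hDdef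
    have hD : IsCover IsClopen D := by
      refine ⟨fun S hS => hS.1, ?_⟩
      ext x
      simp only [mem_univ, iff_true, mem_sUnion]
      obtain ⟨C, hC, hxC, hsub⟩ := hzd x (Metric.ball x ε) Metric.isOpen_ball
        (Metric.mem_ball_self hε)
      exact ⟨C, ⟨hC, x, hsub⟩, hxC⟩
    obtain ⟨hfin, hsub⟩ := legal hτ hp hD
    haveI := hfin.to_subtype
    choose ctr hctr using fun (S : τ (p ++ [D])) => (hsub S.2).2
    refine ⟨Set.range ctr, Set.finite_range ctr, ?_⟩
    intro x hx
    obtain ⟨S, hS, hxS⟩ := Cset_subset τ p hD hx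
    exact mem_biUnion (mem_range_self (⟨S, hS⟩ : τ (p ++ [D]))) (hctr ⟨S, hS⟩ hxS)
  · intro f hf hfp
    have hconv : ∃ x : X, f ≤ nhds x := by
      by_contra hcon
      push_neg at hcon
      have hav := cauchy_clopen_avoid hf hzd hcon
      set D : Set (Set X) := {S | IsClopen S ∧ Sᶜ ∈ f} with hDdef
      have hD : IsCover IsClopen D := by
        refine ⟨fun S hS => hS.1, ?_⟩
        ext x
        simp only [mem_univ, iff_true, mem_sUnion]
        obtain ⟨C, hC, hxC, hCf⟩ := hav x
        exact ⟨C, ⟨hC, hCf⟩, hxC⟩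
      obtain ⟨hfin, hsub⟩ := legal hτ hp hD
      have hcompl : (Fset τ p D)ᶜ ∈ f := by
        have : (Fset τ p D)ᶜ = ⋂ S ∈ τ (p ++ [D]), Sᶜ := by
          simp [Fset, sUnion_eq_biUnion, compl_iUnion]
        rw [this]
        exact (Filter.biInter_mem hfin).2 fun S hS => (hsub hS).2
      have hCf : Cset τ p ∈ f := hfp (Filter.mem_principal_self _)
      have : (∅ : Set X) ∈ f := by
        have hsubF := Cset_subset τ p hD
        have := Filter.inter_mem hCf hcompl
        refine Filter.mem_of_superset this ?_
        intro y ⟨hy1, hy2⟩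
        exact absurd (hsubF hy1) hy2
      exact hf.1.ne (Filter.empty_mem_iff_bot.1 this)
    obtain ⟨x, hx⟩ := hconv
    refine ⟨x, ?_, hx⟩
    have hCf : Cset τ p ∈ f := hfp (Filter.mem_principal_self _)
    have hcl : ClusterPt x (Filter.principal (Cset τ p)) :=
      Filter.NeBot.mono hf.1 (le_inf hx hfp)
    have hxcl : x ∈ closure (Cset τ p) := mem_closure_iff_clusterPt.2 hcl
    rwa [(Cset_closed hτ hp).closure_eq] at hxcl

lemma sel_exists {X : Type*} [TopologicalSpace X] [SecondCountableTopology X]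
    {τ : List (Set (Set X)) → Set (Set X)} (hτ : GoodStrat τ)
    (p : List (Set (Set X))) (hp : ∀ q ∈ p, IsCover IsClopen q) :
    ∃ g : ℕ → Set (Set X), (∀ i, IsCover IsClopen (g i)) ∧
      ∀ x, x ∉ Cset τ p → ∃ i, x ∉ Fset τ p (g i) := by
  haveI hne : Nonempty {D : Set (Set X) // IsCover IsClopen D} := ⟨⟨{Set.univ}, univ_cover⟩⟩
  set s : {D : Set (Set X) // IsCover IsClopen D} → Set X := fun D => (Fset τ p D.1)ᶜ with hs
  have hop : ∀ D, IsOpen (s D) := fun D => (Fset_closed hτ hp D.2).isOpen_compl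
  obtain ⟨T, hTc, hTu⟩ := TopologicalSpace.isOpen_iUnion_countable s hop
  have hT'c : (insert (Classical.arbitrary _) T).Countable := hTc.insert _
  obtain ⟨g0, hg0⟩ := hT'c.exists_eq_range ⟨_, Set.mem_insert _ _⟩
  refine ⟨fun i => (g0 i).1, fun i => (g0 i).2, ?_⟩
  intro x hx
  have hx2 : x ∈ ⋃ D, s D := by
    rw [Cset] at hx
    simp only [mem_iInter, mem_setOf_eq, not_forall] at hx
    obtain ⟨D, hD, hxD⟩ := hx
    exact mem_iUnion.2 ⟨⟨D, hD⟩, hxD⟩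
  rw [← hTu] at hx2
  have hx3 : x ∈ ⋃ i ∈ insert (Classical.arbitrary _) T, s i :=
    Set.biUnion_subset_biUnion_left (Set.subset_insert _ _) hx2
  rw [hg0, Set.biUnion_range] at hx3
  obtain ⟨n, hn⟩ := mem_iUnion.1 hx3
  exact ⟨n, hn⟩

def histG {X : Type*} (sel : List (Set (Set X)) → ℕ → Set (Set X)) :
    List ℕ → List (Set (Set X))
  | [] => []
  | i :: s => histG sel s ++ [sel (histG sel s) i]

/-- If `X` is a zero-dimensional second-countable metrizable space and TWO has a winning
strategy in the mildly Menger game `G_fin(C_O, C_O)` on `X`, then `X` is σ-compact. -/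
theorem stmt5 {X : Type*} [TopologicalSpace X] [SecondCountableTopology X]
    [TopologicalSpace.MetrizableSpace X] (hX : ZeroDim X)
    (h : TWOWinsSel (X := X) IsClopen) :
    SigmaCompactSpace X := by
  obtain ⟨τ, hτ0⟩ := h
  have hτ : GoodStrat τ := hτ0
  letI : MetricSpace X := TopologicalSpace.metrizableSpaceMetric X
  have hzd := hX.2
  have hsel0 : ∀ p : List (Set (Set X)), ∃ g : ℕ → Set (Set X),
      (∀ q ∈ p, IsCover IsClopen q) → ((∀ i, IsCover IsClopen (g i)) ∧
        ∀ x, x ∉ Cset τ p → ∃ i, x ∉ Fset τ p (g i)) := by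
    intro p
    by_cases hp : ∀ q ∈ p, IsCover IsClopen q
    · obtain ⟨g, h1, h2⟩ := sel_exists hτ p hp
      exact ⟨g, fun _ => ⟨h1, h2⟩⟩
    · exact ⟨fun _ => {Set.univ}, fun hq => absurd hq hp⟩
  choose sel hsel using hsel0
  have hG : ∀ s : List ℕ, ∀ q ∈ histG sel s, IsCover IsClopen q := by
    intro s
    induction s with
    | nil => intro q hq; simp [histG] at hq
    | cons i s ih =>
      intro q hq
      rw [histG, List.mem_append] at hq
      rcases hq with hq | hq
      · exact ih q hq
      · rw [List.mem_singleton] at hq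
        rw [hq]
        exact (hsel _ ih).1 i
  have hcover : ∀ x : X, ∃ s : List ℕ, x ∈ Cset τ (histG sel s) := by
    intro x
    by_contra hc
    push_neg at hc
    have hpick : ∀ s : List ℕ, ∃ i, x ∉ Fset τ (histG sel s) (sel (histG sel s) i) :=
      fun s => (hsel _ (hG s)).2 x (hc s)
    choose pick hpick using hpick
    set br : ℕ → List ℕ := fun n => Nat.rec [] (fun _ s => pick s :: s) n with hbrdef
    set u : ℕ → Set (Set X) := fun n => sel (histG sel (br n)) (pick (br n)) with hudef
    have hbr : ∀ n, histG sel (br (n + 1)) = histG sel (br n) ++ [u n] := fun n => rfl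
    have hofn : ∀ n, (List.ofFn fun i : Fin (n + 1) => u i) = histG sel (br (n + 1)) := by
      intro n
      induction n with
      | zero =>
        rw [hbr 0]
        simp [histG]
        rfl
      | succ n ih =>
        rw [List.ofFn_succ', List.concat_eq_append, hbr (n + 1)]
        have : (List.ofFn fun i : Fin (n + 1) => u i.castSucc) =
            List.ofFn fun i : Fin (n + 1) => u i := rfl
        rw [this, ih]
        rfl
    have hucov : ∀ n, IsCover IsClopen (u n) := fun n => (hsel _ (hG (br n))).1 _
    have huniv := (hτ u hucov).2
    have hx : x ∈ ⋃ n, ⋃₀ τ (List.ofFn fun i : Fin (n + 1) => u i) := by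
      rw [huniv]; exact Set.mem_univ x
    obtain ⟨n, hn⟩ := mem_iUnion.1 hx
    rw [hofn n, hbr n] at hn
    exact hpick (br n) hn
  refine ⟨fun n => Cset τ (histG sel (Denumerable.ofNat (List ℕ) n)),
    fun n => Cset_compact hzd hτ (hG _), ?_⟩
  apply Set.eq_univ_of_forall
  intro x
  obtain ⟨s, hs⟩ := hcover x
  exact mem_iUnion.2 ⟨Encodable.encode s, by rw [Denumerable.ofNat_encode]; exact hs⟩
end

section
/- For any topological space X, if player ONE has a winning strategy in the mildly Menger game G_fin(C_O, C_O) on X, then player TWO has a winning strategy in the mildly compact-clopen game on X. -/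
def replayAnswers {α β : Type*} (step : List α → β → α) (l : List β) : List α :=
  l.foldl (fun acc b => acc ++ [step acc b]) []

lemma replayAnswers_append_singleton {α β : Type*} (step : List α → β → α) (l : List β) (b : β) :
    replayAnswers step (l ++ [b]) = replayAnswers step l ++ [step (replayAnswers step l) b] :=
  List.foldl_concat ..

lemma replayAnswers_ofFn {α β : Type*} (step : List α → β → α) (u : ℕ → β) (n : ℕ) :
    replayAnswers step (List.ofFn fun i : Fin n => u i) =
      List.ofFn fun i : Fin n =>
        step (replayAnswers step (List.ofFn fun j : Fin i => u j)) (u i) := by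
  induction n with
  | zero => rfl
  | succ n ih =>
    simp only [List.ofFn_succ', List.concat_eq_append, replayAnswers_append_singleton, ih,
      Fin.val_castSucc, Fin.val_last]

open Classical in
noncomputable def finSubcover {X : Type*} (𝒰 : Set (Set X)) (K : Set X) : Set (Set X) :=
  if h : ∃ 𝒱 ⊆ 𝒰, 𝒱.Finite ∧ K ⊆ ⋃₀ 𝒱 then h.choose else ∅

lemma MildlyCompact.finSubcover_spec {X : Type*} [TopologicalSpace X] {K : Set X}
    (hK : MildlyCompact K) {𝒰 : Set (Set X)} (h𝒰 : IsCover IsClopen 𝒰) :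
    finSubcover 𝒰 K ⊆ 𝒰 ∧ (finSubcover 𝒰 K).Finite ∧ K ⊆ ⋃₀ finSubcover 𝒰 K := by
  have hex : ∃ 𝒱 ⊆ 𝒰, 𝒱.Finite ∧ K ⊆ ⋃₀ 𝒱 := hK 𝒰 h𝒰.1 (h𝒰.2 ▸ Set.subset_univ K)
  rw [finSubcover, dif_pos hex]
  exact hex.choose_spec

/-- If ONE has a winning strategy in the mildly Menger game `G_fin(C_O, C_O)` on `X`,
then TWO has a winning strategy in the mildly compact-clopen game on `X`. -/
theorem stmt7 {X : Type*} [TopologicalSpace X]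
    (h : ONEWinsSel (X := X) IsClopen) :
    TWOWinsCC (X := X) MildlyCompact IsClopen := by
  obtain ⟨σ, hσcover, hσwins⟩ := h
  -- TWO secretly plays the Menger game against `σ`: each `K` is answered by the union of a
  -- finite part of ONE's current cover covering `K`. These finite parts form a legal play
  -- against `σ`, so they do not cover `X`.
  let step : List (Set (Set X)) → Set X → Set (Set X) := fun acc K => finSubcover (σ acc) K
  refine ⟨fun l => ⋃₀ (replayAnswers step l).getLastD ∅, fun u hu => ?_⟩
  set V : ℕ → Set (Set X) :=
    fun n => step (replayAnswers step (List.ofFn fun i : Fin n => u i)) (u n)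
  have hanswer : ∀ n,
      (replayAnswers step (List.ofFn fun i : Fin (n + 1) => u i)).getLastD ∅ = V n := fun n => by
    rw [List.ofFn_succ', List.concat_eq_append, replayAnswers_append_singleton,
      List.getLastD_concat]
    rfl
  have hV : ∀ n, V n ⊆ σ (List.ofFn fun i : Fin n => V i) ∧ (V n).Finite ∧ u n ⊆ ⋃₀ V n :=
    fun n => by
      rw [show (List.ofFn fun i : Fin n => V i) = _ from (replayAnswers_ofFn step u n).symm]
      exact (hu n).finSubcover_spec (hσcover _)
  simp only [hanswer]
  refine ⟨fun n => ⟨?_, (hV n).2.2⟩, hσwins V fun n => ⟨(hV n).2.1, (hV n).1⟩⟩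
  rw [Set.sUnion_eq_biUnion]
  exact (hV n).2.1.isClopen_biUnion fun U hU => (hσcover _).1 U ((hV n).1 hU)
end

section
/- For any topological space X, player ONE has a winning strategy in the compact-clopen game on X if and only if player ONE has a winning strategy in the K-quasi-component-clopen game on X. -/
theorem quasiComp_subset_iff_of_isClopen {X : Type*} [TopologicalSpace X] {K U : Set X}
    (hU : IsClopen U) : QuasiComp K ⊆ U ↔ K ⊆ U :=
  ⟨fun h _ hx => h (Set.mem_sInter.2 fun _ hC => hC.2 hx),
    fun hKU => Set.sInter_subset_of_mem ⟨hU, hKU⟩⟩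

theorem ONEWinsCC.of_forall_exists {X : Type*} {Q Q' R : Set X → Prop}
    (h : ∀ A, Q A → ∃ B, Q' B ∧ ∀ U, R U → B ⊆ U → A ⊆ U) :
    ONEWinsCC Q R → ONEWinsCC Q' R := by
  rintro ⟨σ, hσQ, hσW⟩
  choose τ hτQ' hτR using h
  refine ⟨fun hist => τ (σ hist) (hσQ hist), fun hist => hτQ' _ _, fun v hv => ?_⟩
  exact hσW v fun n => ⟨(hv n).1, hτR _ _ _ (hv n).1 (hv n).2⟩

/-- ONE has a winning strategy in the compact-clopen game on `X` iff ONE has a winning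
strategy in the `K`-quasi-component-clopen game on `X` (where ONE plays
quasi-components of compact subsets of `X`). -/
theorem stmt11 {X : Type*} [TopologicalSpace X] :
    ONEWinsCC (X := X) IsCompact IsClopen ↔
      ONEWinsCC (X := X) (fun A => ∃ K : Set X, IsCompact K ∧ A = QuasiComp K) IsClopen := by
  constructor
  · refine ONEWinsCC.of_forall_exists fun K hK => ⟨QuasiComp K, ⟨K, hK, rfl⟩, fun U hU hKU => ?_⟩
    exact (quasiComp_subset_iff_of_isClopen hU).1 hKU
  · refine ONEWinsCC.of_forall_exists fun A ⟨K, hK, hA⟩ => ⟨K, hK, fun U hU hKU => ?_⟩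
    exact hA ▸ (quasiComp_subset_iff_of_isClopen hU).2 hKU
end

section
/- If a topological space X is the union of countably many quasi-components of compact subsets of X (that is, X = ⋃_{i∈ω} Q_i where each Q_i is the quasi-component of some compact subset K_i of X), then player TWO has a winning strategy in the mildly Menger game G_fin(C_O, C_O) on X. -/
/-- If `X` is the union of countably many quasi-components of compact subsets of `X`,
then TWO has a winning strategy in the mildly Menger game `G_fin(C_O, C_O)` on `X`. -/
theorem stmt13 {X : Type*} [TopologicalSpace X] (K : ℕ → Set X)
    (hK : ∀ i, IsCompact (K i)) (hcov : ⋃ i, QuasiComp (K i) = Set.univ) :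
    TWOWinsSel (X := X) IsClopen := by
  classical
  have key : ∀ (n : ℕ) (𝒰 : Set (Set X)), IsCover IsClopen 𝒰 →
      ∃ v : Set (Set X), v.Finite ∧ v ⊆ 𝒰 ∧ QuasiComp (K n) ⊆ ⋃₀ v := by
    intro n 𝒰 h𝒰
    obtain ⟨hcl, hcu⟩ := h𝒰
    have hsub : K n ⊆ ⋃ U : 𝒰, (U : Set X) := by
      rw [← Set.sUnion_eq_iUnion, hcu]; exact Set.subset_univ _
    obtain ⟨t, ht⟩ := (hK n).elim_finite_subcover (fun U : 𝒰 => (U : Set X))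
      (fun U => (hcl U U.2).isOpen) hsub
    refine ⟨(fun U : 𝒰 => (U : Set X)) '' t, (t.finite_toSet.image _),
      ?_, ?_⟩
    · rintro V ⟨U, _, rfl⟩; exact U.2
    · have hC : IsClopen (⋃₀ ((fun U : 𝒰 => (U : Set X)) '' t)) := by
        rw [Set.sUnion_image]
        exact t.finite_toSet.isClopen_biUnion (fun U _ => hcl U U.2)
      have hKC : K n ⊆ ⋃₀ ((fun U : 𝒰 => (U : Set X)) '' t) := by
        rw [Set.sUnion_image]
        exact ht.trans (by simp [Set.subset_def])
      exact fun x hx => hx _ ⟨hC, hKC⟩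
  set pick : ℕ → Set (Set X) → Set (Set X) := fun n 𝒰 =>
    if h : IsCover IsClopen 𝒰 then Classical.choose (key n 𝒰 h) else ∅ with hpick
  refine ⟨fun h => pick (h.length - 1) (h.getD (h.length - 1) ∅), ?_⟩
  intro u hu
  have hτ : ∀ n : ℕ, (fun h : List (Set (Set X)) =>
      pick (h.length - 1) (h.getD (h.length - 1) ∅))
      (List.ofFn fun i : Fin (n + 1) => u i) = pick n (u n) := by
    intro n
    have hlen : (List.ofFn fun i : Fin (n + 1) => u i).length = n + 1 :=
      List.length_ofFn
    have hget : (List.ofFn fun i : Fin (n + 1) => u i).getD n ∅ = u n := by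
      have : n < (List.ofFn fun i : Fin (n + 1) => u i).length := by
        rw [hlen]; exact Nat.lt_succ_self n
      rw [List.getD_eq_getElem _ _ this, List.getElem_ofFn]
    simp only [hlen, Nat.add_sub_cancel, hget]
  have hprops : ∀ n : ℕ, (pick n (u n)).Finite ∧ pick n (u n) ⊆ u n ∧
      QuasiComp (K n) ⊆ ⋃₀ pick n (u n) := by
    intro n
    rw [hpick]
    simp only [dif_pos (hu n)]
    obtain ⟨h1, h2, h3⟩ := Classical.choose_spec (key n (u n) (hu n))
    exact ⟨h1, h2, h3⟩
  constructor
  · intro n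
    rw [show (fun i : Fin (n + 1) => u ↑i) = (fun i : Fin (n + 1) => u i) from rfl,
      hτ n]
    exact ⟨(hprops n).1, (hprops n).2.1⟩
  · apply Set.eq_univ_of_univ_subset
    rw [← hcov]
    refine Set.iUnion_subset fun i x hx => ?_
    refine Set.mem_iUnion.2 ⟨i, ?_⟩
    rw [hτ i]
    exact (hprops i).2.2 hx
end

section
/- If X is a zero-dimensional topological space that is the union of countably many quasi-components of compact subsets of X, then X is σ-compact. -/
open Set TopologicalSpace

section QuasiComp

variable {X : Type*} [TopologicalSpace X] {K : Set X}

theorem subset_quasiComp : K ⊆ QuasiComp K :=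
  fun _ hx _ hC => hC.2 hx

theorem IsClopen.quasiComp_subset {C : Set X} (hC : IsClopen C) (hKC : K ⊆ C) :
    QuasiComp K ⊆ C :=
  sInter_subset_of_mem ⟨hC, hKC⟩

theorem IsCompact.mildlyCompact (hK : IsCompact K) : MildlyCompact K := by
  intro 𝒰 h𝒰 hK𝒰
  rw [sUnion_eq_biUnion] at hK𝒰
  obtain ⟨𝒱, h𝒱𝒰, h𝒱, hK𝒱⟩ :=
    hK.elim_finite_subcover_image (c := id) (fun U hU => (h𝒰 U hU).isOpen) hK𝒰
  exact ⟨𝒱, h𝒱𝒰, h𝒱, by rwa [sUnion_eq_biUnion]⟩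

theorem MildlyCompact.quasiComp (hK : MildlyCompact K) : MildlyCompact (QuasiComp K) := by
  intro 𝒰 h𝒰 hQ𝒰
  obtain ⟨𝒱, h𝒱𝒰, h𝒱, hK𝒱⟩ := hK 𝒰 h𝒰 (subset_quasiComp.trans hQ𝒰)
  have h𝒱_clopen : IsClopen (⋃₀ 𝒱) := by
    rw [sUnion_eq_biUnion]
    exact h𝒱.isClopen_biUnion fun U hU => h𝒰 U (h𝒱𝒰 hU)
  exact ⟨𝒱, h𝒱𝒰, h𝒱, h𝒱_clopen.quasiComp_subset hK𝒱⟩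

theorem MildlyCompact.isCompact (hB : IsTopologicalBasis {C : Set X | IsClopen C})
    (hK : MildlyCompact K) : IsCompact K :=
  isCompact_generateFrom hB.eq_generateFrom hK

end QuasiComp

theorem ZeroDim.isTopologicalBasis_isClopen {X : Type*} [TopologicalSpace X] (hX : ZeroDim X) :
    IsTopologicalBasis {C : Set X | IsClopen C} :=
  isTopologicalBasis_of_isOpen_of_nhds (fun _ hC => hC.isOpen)
    fun x U hxU hU => hX.2 x U hU hxU

/-- If `X` is a zero-dimensional space which is the union of countably many
quasi-components of compact subsets of `X`, then `X` is σ-compact. -/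
theorem stmt15 {X : Type*} [TopologicalSpace X] (hX : ZeroDim X) (K : ℕ → Set X)
    (hK : ∀ i, IsCompact (K i)) (hcov : ⋃ i, QuasiComp (K i) = Set.univ) :
    SigmaCompactSpace X :=
  ⟨⟨fun i => QuasiComp (K i),
    fun i => (hK i).mildlyCompact.quasiComp.isCompact hX.isTopologicalBasis_isClopen, hcov⟩⟩
end

section
/- For a zero-dimensional second-countable metrizable space X, player TWO has a winning strategy in the mildly Menger game G_fin(C_O, C_O) on X if and only if X is a σ-mildly compact space. -/
open Set TopologicalSpace

section Aux

variable {X : Type*} [TopologicalSpace X]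

/-- The property of `τ` being a winning strategy for TWO (body of `TWOWinsSel IsClopen`). -/
private def TwoStrat (τ : List (Set (Set X)) → Set (Set X)) : Prop :=
  ∀ u : ℕ → Set (Set X), (∀ n, IsCover IsClopen (u n)) →
      (∀ n, (τ (List.ofFn fun i : Fin (n + 1) => u i)).Finite ∧
        τ (List.ofFn fun i : Fin (n + 1) => u i) ⊆ u n) ∧
      (⋃ n, ⋃₀ τ (List.ofFn fun i : Fin (n + 1) => u i)) = Set.univ

/-- The "core" after a finite history `s` of clopen covers. -/
private def Kset (τ : List (Set (Set X)) → Set (Set X)) (s : List (Set (Set X))) : Set X :=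
  ⋂ u ∈ {u : Set (Set X) | IsCover IsClopen u}, ⋃₀ τ (s ++ [u])

private lemma mem_Kset {τ : List (Set (Set X)) → Set (Set X)} {s : List (Set (Set X))} {x : X} :
    x ∈ Kset τ s ↔ ∀ u : Set (Set X), IsCover IsClopen u → x ∈ ⋃₀ τ (s ++ [u]) := by
  simp [Kset]

private lemma univ_isCover : IsCover (X := X) IsClopen {Set.univ} := by
  constructor
  · intro U hU
    rw [Set.mem_singleton_iff] at hU
    subst hU
    exact isClopen_univ
  · simp

/-- Legality of TWO's responses along any finite history of clopen covers. -/
private lemma round_spec {τ : List (Set (Set X)) → Set (Set X)} (Hτ : TwoStrat τ)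
    (s : List (Set (Set X))) (hs : ∀ v ∈ s, IsCover IsClopen v)
    {u : Set (Set X)} (hu : IsCover IsClopen u) :
    (τ (s ++ [u])).Finite ∧ τ (s ++ [u]) ⊆ u := by
  classical
  set w : ℕ → Set (Set X) := fun i => if h : i < s.length then s[i] else u with hw
  have hwc : ∀ n, IsCover IsClopen (w n) := by
    intro n
    by_cases h : n < s.length
    · simpa [w, h] using hs _ (s.getElem_mem h)
    · simpa [w, h] using hu
  have key : (List.ofFn fun i : Fin (s.length + 1) => w i) = s ++ [u] := by
    apply List.ext_getElem
    · simp
    · intro i h1 h2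
      simp only [List.getElem_ofFn]
      by_cases h : i < s.length
      · rw [List.getElem_append_left h]
        simp [w, h]
      · have hi : i = s.length := by
          simp only [List.length_append, List.length_singleton] at h2
          omega
        subst hi
        rw [List.getElem_append_right (le_refl s.length)]
        simp [w]
  have h1 := (Hτ w hwc).1 s.length
  have hws : w s.length = u := by simp [w]
  rw [key, hws] at h1
  exact h1

private lemma sUnion_response_clopen {τ : List (Set (Set X)) → Set (Set X)} (Hτ : TwoStrat τ)
    (s : List (Set (Set X))) (hs : ∀ v ∈ s, IsCover IsClopen v)
    {u : Set (Set X)} (hu : IsCover IsClopen u) :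
    IsClopen (⋃₀ τ (s ++ [u])) := by
  have hr := round_spec Hτ s hs hu
  rw [Set.sUnion_eq_biUnion]
  exact Set.Finite.isClopen_biUnion hr.1 fun V hV => hu.1 V (hr.2 hV)

/-- The core after a good history is mildly compact. -/
private lemma Kset_mildlyCompact {τ : List (Set (Set X)) → Set (Set X)} (Hτ : TwoStrat τ)
    (s : List (Set (Set X))) (hs : ∀ v ∈ s, IsCover IsClopen v) :
    MildlyCompact (Kset τ s) := by
  classical
  intro 𝒲 h𝒲 hcov
  set Comp : Set (Set X) := {A | ∃ u, IsCover IsClopen u ∧ A = (⋃₀ τ (s ++ [u]))ᶜ} with hComp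
  set u' : Set (Set X) := 𝒲 ∪ Comp with hu'def
  have hu' : IsCover IsClopen u' := by
    constructor
    · rintro U (hU | ⟨u, hu, rfl⟩)
      · exact h𝒲 U hU
      · exact (sUnion_response_clopen Hτ s hs hu).compl
    · apply Set.eq_univ_of_forall
      intro x
      by_cases hx : x ∈ Kset τ s
      · obtain ⟨V, hV, hxV⟩ := hcov hx
        exact ⟨V, Or.inl hV, hxV⟩
      · rw [mem_Kset] at hx
        push_neg at hx
        obtain ⟨u, hu, hxu⟩ := hx
        exact ⟨(⋃₀ τ (s ++ [u]))ᶜ, Or.inr ⟨u, hu, rfl⟩, hxu⟩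
  have hr := round_spec Hτ s hs hu'
  refine ⟨τ (s ++ [u']) ∩ 𝒲, Set.inter_subset_right, hr.1.inter_of_left _, ?_⟩
  intro x hx
  have hx2 : x ∈ ⋃₀ τ (s ++ [u']) := mem_Kset.mp hx u' hu'
  obtain ⟨V, hV, hxV⟩ := hx2
  rcases hr.2 hV with h𝒲V | ⟨u, hu, rfl⟩
  · exact ⟨V, ⟨hV, h𝒲V⟩, hxV⟩
  · exact absurd (mem_Kset.mp hx u hu) hxV

/-- Countably many covers suffice to witness non-membership in the core. -/
private lemma exists_countable_core [SecondCountableTopology X]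
    {τ : List (Set (Set X)) → Set (Set X)} (Hτ : TwoStrat τ)
    (s : List (Set (Set X))) (hs : ∀ v ∈ s, IsCover IsClopen v) :
    ∃ 𝒞 : Set (Set (Set X)), 𝒞.Countable ∧ (∀ u ∈ 𝒞, IsCover IsClopen u) ∧
      ∀ x : X, x ∉ Kset τ s → ∃ u ∈ 𝒞, x ∉ ⋃₀ τ (s ++ [u]) := by
  obtain ⟨T, hTc, hT⟩ := TopologicalSpace.isOpen_iUnion_countable
      (fun i : {u : Set (Set X) // IsCover IsClopen u} => (⋃₀ τ (s ++ [i.1]))ᶜ)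
      (fun i => (sUnion_response_clopen Hτ s hs i.2).compl.isOpen)
  refine ⟨Subtype.val '' T, hTc.image _, ?_, ?_⟩
  · rintro u ⟨i, _, rfl⟩
    exact i.2
  · intro x hx
    rw [mem_Kset] at hx
    push_neg at hx
    obtain ⟨u, hu, hxu⟩ := hx
    have hmem : x ∈ ⋃ i : {u : Set (Set X) // IsCover IsClopen u}, (⋃₀ τ (s ++ [i.1]))ᶜ :=
      Set.mem_iUnion.mpr ⟨⟨u, hu⟩, hxu⟩
    rw [← hT] at hmem
    obtain ⟨i, hiT, hxi⟩ := Set.mem_iUnion₂.mp hmem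
    exact ⟨i.1, ⟨i, hiT, rfl⟩, hxi⟩

/-- The countable tree of good histories. -/
private def Hset (CC : List (Set (Set X)) → Set (Set (Set X))) :
    ℕ → Set (List (Set (Set X)))
  | 0 => {[]}
  | n + 1 => ⋃ s ∈ Hset CC n, (fun u => s ++ [u]) '' CC s

/-- A deterministic play built from a step function. -/
private def seqFun (step : List (Set (Set X)) → Set (Set X)) : ℕ → List (Set (Set X))
  | 0 => []
  | n + 1 => seqFun step n ++ [step (seqFun step n)]

end Aux

/-- For a zero-dimensional second-countable metrizable space `X`, TWO has a winning
strategy in the mildly Menger game `G_fin(C_O, C_O)` on `X` iff `X` is σ-mildly compact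
(a countable union of mildly compact subspaces). -/

theorem stmt16 {X : Type*} [TopologicalSpace X] [SecondCountableTopology X]
    [TopologicalSpace.MetrizableSpace X] (hX : ZeroDim X) :
    TWOWinsSel (X := X) IsClopen ↔
      ∃ A : ℕ → Set X, (∀ n, MildlyCompact (A n)) ∧ (⋃ n, A n) = Set.univ := by
  classical
  constructor
  · -- hard direction
    rintro ⟨τ, Hτ⟩
    have Hτ' : TwoStrat τ := Hτ
    have hCC : ∀ s : List (Set (Set X)), ∃ 𝒞 : Set (Set (Set X)),
        𝒞.Countable ∧ (∀ u ∈ 𝒞, IsCover IsClopen u) ∧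
        ((∀ v ∈ s, IsCover IsClopen v) →
          ∀ x : X, x ∉ Kset τ s → ∃ u ∈ 𝒞, x ∉ ⋃₀ τ (s ++ [u])) := by
      intro s
      by_cases hs : ∀ v ∈ s, IsCover IsClopen v
      · obtain ⟨𝒞, h1, h2, h3⟩ := exists_countable_core Hτ' s hs
        exact ⟨𝒞, h1, h2, fun _ => h3⟩
      · exact ⟨∅, Set.countable_empty, by simp, fun h => absurd h hs⟩
    choose CC hCCc hCCcov hCCx using hCC
    set H : ℕ → Set (List (Set (Set X))) := Hset CC with hH
    have hHgood : ∀ n, ∀ s ∈ H n, ∀ v ∈ s, IsCover IsClopen v := by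
      intro n
      induction n with
      | zero =>
        intro s hsmem
        rw [hH] at hsmem
        simp only [Hset, Set.mem_singleton_iff] at hsmem
        subst hsmem
        simp
      | succ n ih =>
        intro s hsmem
        rw [hH] at hsmem
        simp only [Hset, Set.mem_iUnion, Set.mem_image] at hsmem
        obtain ⟨t, htH, u, huCC, rfl⟩ := hsmem
        intro v hv
        rcases List.mem_append.mp hv with hvt | hvu
        · exact ih t htH v hvt
        · rw [List.mem_singleton] at hvu
          subst hvu
          exact hCCcov t v huCC
    set GH : Set (List (Set (Set X))) := ⋃ n, H n with hGH
    have hGHgood : ∀ s ∈ GH, ∀ v ∈ s, IsCover IsClopen v := by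
      intro s hsmem
      obtain ⟨n, hn⟩ := Set.mem_iUnion.mp hsmem
      exact hHgood n s hn
    have hHc : ∀ n, (H n).Countable := by
      intro n
      induction n with
      | zero =>
        rw [hH]
        simp only [Hset]
        exact Set.countable_singleton _
      | succ n ih =>
        rw [hH]
        simp only [Hset]
        exact Set.Countable.biUnion (by rw [hH] at ih; exact ih)
          fun s _ => (hCCc s).image _
    have hGHc : GH.Countable := Set.countable_iUnion hHc
    have hGHne : GH.Nonempty := ⟨[], Set.mem_iUnion.mpr ⟨0, by rw [hH]; simp [Hset]⟩⟩
    obtain ⟨f, hf⟩ := hGHc.exists_eq_range hGHne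
    refine ⟨fun n => Kset τ (f n), ?_, ?_⟩
    · intro n
      have hfn : f n ∈ GH := by rw [hf]; exact ⟨n, rfl⟩
      exact Kset_mildlyCompact Hτ' (f n) (hGHgood _ hfn)
    · apply Set.eq_univ_of_forall
      intro x
      by_contra hx
      rw [Set.mem_iUnion] at hx
      push_neg at hx
      have hxGH : ∀ s ∈ GH, x ∉ Kset τ s := by
        intro s hsmem
        rw [hf] at hsmem
        obtain ⟨n, rfl⟩ := hsmem
        exact hx n
      set step : List (Set (Set X)) → Set (Set X) :=
        fun s => if h : ∃ u ∈ CC s, x ∉ ⋃₀ τ (s ++ [u]) then h.choose else {Set.univ}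
        with hstep
      have hstepspec : ∀ s : List (Set (Set X)),
          (∃ u ∈ CC s, x ∉ ⋃₀ τ (s ++ [u])) →
          step s ∈ CC s ∧ x ∉ ⋃₀ τ (s ++ [step s]) := by
        intro s hex
        rw [hstep]
        simp only [dif_pos hex]
        exact ⟨hex.choose_spec.1, hex.choose_spec.2⟩
      set sq : ℕ → List (Set (Set X)) := seqFun step with hsq
      have hsq1 : ∀ n, sq (n + 1) = sq n ++ [step (sq n)] := fun n => rfl
      have hmem : ∀ n, sq n ∈ H n := by
        intro n
        induction n with
        | zero =>
          rw [hH]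
          simp only [Hset]
          rfl
        | succ n ih =>
          have hsGH : sq n ∈ GH := Set.mem_iUnion.mpr ⟨n, ih⟩
          have hex : ∃ u ∈ CC (sq n), x ∉ ⋃₀ τ (sq n ++ [u]) :=
            hCCx (sq n) (hGHgood _ hsGH) x (hxGH _ hsGH)
          rw [hH]
          simp only [Hset, Set.mem_iUnion, Set.mem_image]
          exact ⟨sq n, by rw [hH] at ih; exact ih, step (sq n),
            (hstepspec _ hex).1, (hsq1 n).symm⟩
      have hdodge : ∀ n, step (sq n) ∈ CC (sq n) ∧ x ∉ ⋃₀ τ (sq n ++ [step (sq n)]) := by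
        intro n
        have hsGH : sq n ∈ GH := Set.mem_iUnion.mpr ⟨n, hmem n⟩
        exact hstepspec _ (hCCx (sq n) (hGHgood _ hsGH) x (hxGH _ hsGH))
      set up : ℕ → Set (Set X) := fun n => step (sq n) with hup
      have hupc : ∀ n, IsCover IsClopen (up n) :=
        fun n => hCCcov (sq n) _ (hdodge n).1
      have hpre : ∀ n, (List.ofFn fun i : Fin (n + 1) => up i) = sq (n + 1) := by
        intro n
        induction n with
        | zero =>
          simp only [List.ofFn_succ, List.ofFn_zero]
          rw [hsq1 0]
          rfl
        | succ n ih =>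
          rw [List.ofFn_succ']
          have hcast : (fun i : Fin (n + 1) => up ((i.castSucc : Fin (n + 2)) : ℕ)) =
              fun i : Fin (n + 1) => up i := by
            funext i
            simp [Fin.coe_castSucc]
          simp only [List.concat_eq_append]
          rw [hcast, ih, hsq1 (n + 1)]
          simp [Fin.val_last]
          rfl
      have hwin := (Hτ' up hupc).2
      have hxmem : x ∈ ⋃ n, ⋃₀ τ (List.ofFn fun i : Fin (n + 1) => up i) := by
        rw [hwin]; trivial
      obtain ⟨n, hn⟩ := Set.mem_iUnion.mp hxmem
      rw [hpre n, hsq1 n] at hn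
      exact (hdodge n).2 hn
  · -- easy direction
    rintro ⟨A, hA, hAcov⟩
    set pick : ℕ → Set (Set X) → Set (Set X) := fun n 𝒰 =>
      if h : (∀ U ∈ 𝒰, IsClopen U) ∧ A n ⊆ ⋃₀ 𝒰 then (hA n 𝒰 h.1 h.2).choose else ∅
      with hpick
    refine ⟨fun l => pick (l.length - 1) (l.getLast?.getD ∅), ?_⟩
    intro u hu
    have hcond : ∀ n, (∀ U ∈ u n, IsClopen U) ∧ A n ⊆ ⋃₀ u n :=
      fun n => ⟨(hu n).1, by rw [(hu n).2]; exact Set.subset_univ _⟩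
    have hlast : ∀ n : ℕ, (List.ofFn fun i : Fin (n + 1) => u i).getLast?.getD ∅ = u n := by
      intro n
      rw [List.ofFn_succ', List.concat_eq_append, List.getLast?_concat]
      simp
    have heval : ∀ n, (fun l : List (Set (Set X)) => pick (l.length - 1) (l.getLast?.getD ∅))
        (List.ofFn fun i : Fin (n + 1) => u i) = pick n (u n) := by
      intro n
      simp only [List.length_ofFn, Nat.add_sub_cancel, hlast n]
    have hspec : ∀ n, pick n (u n) ⊆ u n ∧
        ((pick n (u n)).Finite ∧ A n ⊆ ⋃₀ pick n (u n)) := by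
      intro n
      rw [hpick]
      simp only [dif_pos (hcond n)]
      exact (hA n (u n) (hcond n).1 (hcond n).2).choose_spec
    constructor
    · intro n
      rw [heval n]
      exact ⟨(hspec n).2.1, (hspec n).1⟩
    · apply Set.eq_univ_of_forall
      intro y
      have hy : y ∈ ⋃ n, A n := by rw [hAcov]; trivial
      obtain ⟨n, hn⟩ := Set.mem_iUnion.mp hy
      refine Set.mem_iUnion.mpr ⟨n, ?_⟩
      rw [heval n]
      exact (hspec n).2.2 hn
end

section
/- Let X be the one-point compactification of an uncountable discrete space, let Y be a connected Hausdorff space that is not σ-compact, and let Z = X × Y. Then for any y ∈ Y, the quasi-component in Z of the compact set X × {y} is all of Z (i.e., the only clopen subset of Z containing X × {y} is Z itself), yet Z is not σ-compact. -/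
section

open Set

variable {X Y : Type*} [TopologicalSpace X] [TopologicalSpace Y]

theorem Function.Surjective.sigmaCompactSpace [SigmaCompactSpace X] {f : X → Y}
    (hsurj : Function.Surjective f) (hf : Continuous f) : SigmaCompactSpace Y :=
  isSigmaCompact_univ_iff.mp (hsurj.range_eq ▸ isSigmaCompact_range hf)

theorem IsClopen.mk_mem_of_mk_mem [PreconnectedSpace Y] {C : Set (X × Y)} (hC : IsClopen C)
    {x : X} {y : Y} (h : (x, y) ∈ C) (y' : Y) : (x, y') ∈ C := by
  have hfibre : IsClopen ((x, ·) ⁻¹' C) := hC.preimage (Continuous.prodMk_right x)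
  show y' ∈ (x, ·) ⁻¹' C
  rw [hfibre.eq_univ ⟨y, h⟩]
  trivial

theorem quasiComp_univ_prod_singleton [PreconnectedSpace Y] (y : Y) :
    QuasiComp (univ ×ˢ {y} : Set (X × Y)) = univ :=
  eq_univ_of_forall fun z _ ⟨hC, hK⟩ =>
    hC.mk_mem_of_mk_mem (hK (mk_mem_prod (mem_univ z.1) rfl)) z.2

end

theorem stmt17_general (D : Type*) [TopologicalSpace D]
    (Y : Type*) [TopologicalSpace Y] [ConnectedSpace Y]
    (hY : ¬ SigmaCompactSpace Y) (y : Y) :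
    QuasiComp ((Set.univ : Set (OnePoint D)) ×ˢ ({y} : Set Y)) =
      (Set.univ : Set (OnePoint D × Y)) ∧
    ¬ SigmaCompactSpace (OnePoint D × Y) :=
  ⟨quasiComp_univ_prod_singleton y,
    fun _ => hY ((Prod.snd_surjective (α := OnePoint D)).sigmaCompactSpace continuous_snd)⟩

/-- Let `X = OnePoint D` be the one-point compactification of an uncountable discrete
space `D`, let `Y` be a connected Hausdorff space which is not σ-compact, and
`Z = X × Y`.  Then for any `y ∈ Y` the quasi-component in `Z` of the compact set
`X × {y}` is all of `Z`, yet `Z` is not σ-compact. -/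
theorem stmt17 (D : Type*) [TopologicalSpace D] [DiscreteTopology D] [Uncountable D]
    (Y : Type*) [TopologicalSpace Y] [ConnectedSpace Y] [T2Space Y]
    (hY : ¬ SigmaCompactSpace Y) (y : Y) :
    QuasiComp ((Set.univ : Set (OnePoint D)) ×ˢ ({y} : Set Y)) =
      (Set.univ : Set (OnePoint D × Y)) ∧
    ¬ SigmaCompactSpace (OnePoint D × Y) :=
  stmt17_general D Y hY y
end
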